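/- Fix a real E-by-V matrix d, a diagonal V-by-V matrix ★₀ with positive diagonal, a diagonal E-by-E matrix ★₁, an edge e ∈ E, and n = |V|. For t ∈ ℝ let ★₁(t) = ★₁ + t Eₑₑ. Suppose xⁱ(t) ∈ ℝ^V and λⁱ(t) ∈ ℝ (i = 1, …, n) are differentiable at 0, satisfy dᵀ★₁(t)d xⁱ(t) = λⁱ(t) ★₀ xⁱ(t) and (xⁱ(t))ᵀ★₀xⁱ(t) = 1 near 0, satisfy (xⁱ(0))ᵀ★₀xʲ(0) = δᵢⱼ, and the eigenvalues λ¹(0), …, λⁿ(0) are pairwise distinct. Then for each i, (xⁱ)'(0) = Σ_{j ≠ i} (λⁱ(0) − λʲ(0))⁻¹ · yⱼₑ · yⁱₑ · xʲ(0), where yⁱ = d xⁱ(0) and yⱼₑ denotes component e of d xʲ(0). -/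

import Mathlib

/-!
Differentiating `(A + t B) xⁱ(t) = λⁱ(t) S xⁱ(t)`, where `B = dᵀEₑₑd`, at `t = 0` and pairing with
`xʲ(0)`, the symmetry of `A = dᵀ★₁d` and `S = ★₀` turns the `A`-term into `λʲ ⟨xʲ, S (xⁱ)'⟩`, so for `j ≠ i`
`(λⁱ − λʲ) ⟨xʲ, S (xⁱ)'⟩ = ⟨xʲ, B xⁱ⟩ = yʲₑ yⁱₑ`; differentiating the normalization gives
`⟨xⁱ, S (xⁱ)'⟩ = 0`. Expanding `(xⁱ)'` in the `S`-orthonormal basis `(xʲ(0))` gives the formula.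
-/

open Matrix Filter Topology

namespace Matrix

section Orthonormal

variable {R n : Type*} [CommRing R] [Fintype n] [DecidableEq n]

theorem eq_sum_dotProduct_mulVec_smul_of_orthonormal {G : Matrix n n R} {b : n → n → R}
    (hb : ∀ i j, b i ⬝ᵥ (G *ᵥ b j) = if i = j then 1 else 0) (v : n → R) :
    v = ∑ j, (b j ⬝ᵥ (G *ᵥ v)) • b j := by
  have hgram : of b * G * (of b)ᵀ = 1 := by
    ext i j
    rw [one_apply, ← hb i j, dotProduct_mulVec]
    rfl
  have hinv : (of b)ᵀ * (of b * G) = 1 := mul_eq_one_comm.1 hgram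
  calc v = ((of b)ᵀ * (of b * G)) *ᵥ v := by rw [hinv, one_mulVec]
    _ = ∑ j, (b j ⬝ᵥ (G *ᵥ v)) • b j := by
      rw [← mulVec_mulVec, mulVec_transpose, vecMul_eq_sum, ← mulVec_mulVec]
      rfl

end Orthonormal

section Symmetric

variable {R n : Type*} [CommSemiring R] [Fintype n]

theorem IsSymm.dotProduct_mulVec_comm {S : Matrix n n R} (hS : S.IsSymm) (u w : n → R) :
    u ⬝ᵥ (S *ᵥ w) = w ⬝ᵥ (S *ᵥ u) := by
  rw [dotProduct_mulVec, ← hS.eq, vecMul_transpose, dotProduct_comm, hS.eq]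

theorem IsSymm.dotProduct_mulVec_of_eigen {A S : Matrix n n R} (hA : A.IsSymm) (hS : S.IsSymm)
    {y : n → R} {μ : R} (hy : A *ᵥ y = μ • (S *ᵥ y)) (w : n → R) :
    y ⬝ᵥ (A *ᵥ w) = μ * (y ⬝ᵥ (S *ᵥ w)) := by
  rw [hA.dotProduct_mulVec_comm, hy, dotProduct_smul, smul_eq_mul, hS.dotProduct_mulVec_comm]

end Symmetric

theorem dotProduct_mulVec_transpose_single_mul {R E V : Type*} [CommSemiring R] [Fintype E]
    [Fintype V] [DecidableEq E] (d : Matrix E V R) (e : E) (u w : V → R) :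
    u ⬝ᵥ ((dᵀ * single e e (1 : R) * d) *ᵥ w) = (d *ᵥ u) e * (d *ᵥ w) e := by
  rw [← mulVec_mulVec, ← mulVec_mulVec, dotProduct_mulVec, vecMul_transpose, single_mulVec,
    one_mul, ← Pi.single, dotProduct_single]

end Matrix

section Deriv

variable {𝕜 m n : Type*} [NontriviallyNormedField 𝕜] [Fintype n]
  {u v : 𝕜 → n → 𝕜} {u' v' : n → 𝕜} {t : 𝕜}

theorem HasDerivAt.dotProduct (hu : HasDerivAt u u' t) (hv : HasDerivAt v v' t) :
    HasDerivAt (fun s => u s ⬝ᵥ v s) (u' ⬝ᵥ v t + u t ⬝ᵥ v') t := by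
  simpa [_root_.dotProduct, Finset.sum_add_distrib] using
    HasDerivAt.fun_sum (u := Finset.univ) fun k _ =>
      (hasDerivAt_pi.1 hu k).mul (hasDerivAt_pi.1 hv k)

theorem HasDerivAt.mulVec (M : Matrix m n 𝕜) (hu : HasDerivAt u u' t) :
    HasDerivAt (fun s => M *ᵥ u s) (M *ᵥ u') t :=
  hasDerivAt_pi.2 fun i => by simpa [Matrix.mulVec] using (hasDerivAt_const t (M i)).dotProduct hu

end Deriv

section Pencil

variable {𝕜 n : Type*} [NontriviallyNormedField 𝕜] [Fintype n]
  {A B S : Matrix n n 𝕜} {x : 𝕜 → n → 𝕜} {x' : n → 𝕜} {lam : 𝕜 → 𝕜} {lam' : 𝕜}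

theorem eigen_pencil_deriv_eq (hx : HasDerivAt x x' 0) (hlam : HasDerivAt lam lam' 0)
    (heig : ∀ᶠ t in 𝓝 0, (A + t • B) *ᵥ x t = lam t • (S *ᵥ x t)) :
    A *ᵥ x' + B *ᵥ x 0 = lam' • (S *ᵥ x 0) + lam 0 • (S *ᵥ x') := by
  have hL : HasDerivAt (fun t => (A + t • B) *ᵥ x t) (A *ᵥ x' + B *ᵥ x 0) 0 := by
    refine ((hx.mulVec A).add ((hasDerivAt_id (0 : 𝕜)).smul (hx.mulVec B))).congr_of_eventuallyEq
      (Eventually.of_forall fun t => ?_) |>.congr_deriv (by simp)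
    simp [add_mulVec, smul_mulVec]
  have hR : HasDerivAt (fun t => lam t • (S *ᵥ x t)) (lam' • (S *ᵥ x 0) + lam 0 • (S *ᵥ x')) 0 :=
    add_comm (lam 0 • (S *ᵥ x')) _ ▸ hlam.smul (hx.mulVec S)
  exact (hR.congr_of_eventuallyEq heig).unique hL |>.symm

theorem dotProduct_mulVec_deriv_eq_zero_of_normalized [CharZero 𝕜] (hS : S.IsSymm)
    (hx : HasDerivAt x x' 0) (hnorm : ∀ᶠ t in 𝓝 0, x t ⬝ᵥ (S *ᵥ x t) = 1) :
    x 0 ⬝ᵥ (S *ᵥ x') = 0 := by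
  have h := ((hasDerivAt_const (0 : 𝕜) (1 : 𝕜)).congr_of_eventuallyEq hnorm).unique
    (hx.dotProduct (hx.mulVec S))
  rw [hS.dotProduct_mulVec_comm x'] at h
  simpa using h.symm

theorem dotProduct_mulVec_deriv_eq_of_eigen_ne (hA : A.IsSymm) (hS : S.IsSymm) {y x₀ : n → 𝕜}
    {μ lam₀ : 𝕜} (hy : A *ᵥ y = μ • (S *ᵥ y)) (horth : y ⬝ᵥ (S *ᵥ x₀) = 0) (hne : lam₀ ≠ μ)
    (hderiv : A *ᵥ x' + B *ᵥ x₀ = lam' • (S *ᵥ x₀) + lam₀ • (S *ᵥ x')) :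
    y ⬝ᵥ (S *ᵥ x') = (lam₀ - μ)⁻¹ * (y ⬝ᵥ (B *ᵥ x₀)) := by
  have h := congrArg (y ⬝ᵥ ·) hderiv
  simp only [dotProduct_add, dotProduct_smul, smul_eq_mul, hA.dotProduct_mulVec_of_eigen hS hy,
    horth] at h
  rw [eq_inv_mul_iff_mul_eq₀ (sub_ne_zero.2 hne)]
  linear_combination -h

end Pencil

theorem stmt_12_general {E V : Type*} [Fintype E] [Fintype V] [DecidableEq E] [DecidableEq V]
    (d : Matrix E V ℝ) (s0 : V → ℝ) (s1 : E → ℝ) (e : E)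
    (x : V → ℝ → V → ℝ) (lam : V → ℝ → ℝ)
    (x' : V → V → ℝ) (lam' : V → ℝ)
    (hx : ∀ i, HasDerivAt (x i) (x' i) 0)
    (hlam : ∀ i, HasDerivAt (lam i) (lam' i) 0)
    (heig : ∀ i, ∀ᶠ t in 𝓝 (0 : ℝ),
      (dᵀ * (Matrix.diagonal s1 + t • Matrix.single e e 1) * d) *ᵥ x i t
        = lam i t • (Matrix.diagonal s0 *ᵥ x i t))
    (hnorm : ∀ i, ∀ᶠ t in 𝓝 (0 : ℝ), x i t ⬝ᵥ (Matrix.diagonal s0 *ᵥ x i t) = 1)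
    (horth : ∀ i j, x i 0 ⬝ᵥ (Matrix.diagonal s0 *ᵥ x j 0) = if i = j then 1 else 0)
    (hdist : ∀ i j, i ≠ j → lam i 0 ≠ lam j 0) :
    ∀ i, x' i = ∑ j ∈ Finset.univ.erase i,
      ((lam i 0 - lam j 0)⁻¹ * ((d *ᵥ x j 0) e) * ((d *ᵥ x i 0) e)) • x j 0 := by
  intro i
  have hpencil (t : ℝ) : dᵀ * (diagonal s1 + t • single e e (1 : ℝ)) * d
      = dᵀ * diagonal s1 * d + t • (dᵀ * single e e (1 : ℝ) * d) := by
    rw [Matrix.mul_add, Matrix.add_mul, Matrix.mul_smul, Matrix.smul_mul]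
  have hS : (diagonal s0).IsSymm := isSymm_diagonal s0
  have hA : (dᵀ * diagonal s1 * d).IsSymm := by
    simp [IsSymm, transpose_mul, Matrix.mul_assoc]
  have heig₀ (j : V) : (dᵀ * diagonal s1 * d) *ᵥ x j 0 = lam j 0 • (diagonal s0 *ᵥ x j 0) := by
    simpa [hpencil] using (heig j).self_of_nhds
  have hderiv := eigen_pencil_deriv_eq (hx i) (hlam i) (by simpa only [hpencil] using heig i)
  conv_lhs => rw [eq_sum_dotProduct_mulVec_smul_of_orthonormal horth (x' i),
    ← Finset.add_sum_erase _ _ (Finset.mem_univ i),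
    dotProduct_mulVec_deriv_eq_zero_of_normalized hS (hx i) (hnorm i), zero_smul, zero_add]
  refine Finset.sum_congr rfl fun j hj => ?_
  have hji : j ≠ i := Finset.ne_of_mem_erase hj
  rw [dotProduct_mulVec_deriv_eq_of_eigen_ne hA hS (heig₀ j) (by simpa [hji] using horth j i)
    (hdist i j hji.symm) hderiv, dotProduct_mulVec_transpose_single_mul, mul_assoc]

/-- Derivative of a `★₀`-orthonormalized generalized eigenvector of the pencil
`(dᵀ★₁(t)d, ★₀)` under perturbation `★₁(t) = ★₁ + t Eₑₑ`, with pairwise distinct eigenvalues: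
`(xⁱ)'(0) = Σ_{j ≠ i} (λⁱ − λʲ)⁻¹ yʲₑ yⁱₑ xʲ`, where `yⁱ = d xⁱ(0)`. -/
theorem stmt_12 {E V : Type*} [Fintype E] [Fintype V] [DecidableEq E] [DecidableEq V]
    (d : Matrix E V ℝ) (s0 : V → ℝ) (hs0 : ∀ v, 0 < s0 v) (s1 : E → ℝ) (e : E)
    (x : V → ℝ → V → ℝ) (lam : V → ℝ → ℝ)
    (x' : V → V → ℝ) (lam' : V → ℝ)
    (hx : ∀ i, HasDerivAt (x i) (x' i) 0)
    (hlam : ∀ i, HasDerivAt (lam i) (lam' i) 0)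
    (heig : ∀ i, ∀ᶠ t in 𝓝 (0 : ℝ),
      (dᵀ * (Matrix.diagonal s1 + t • Matrix.single e e 1) * d) *ᵥ x i t
        = lam i t • (Matrix.diagonal s0 *ᵥ x i t))
    (hnorm : ∀ i, ∀ᶠ t in 𝓝 (0 : ℝ), x i t ⬝ᵥ (Matrix.diagonal s0 *ᵥ x i t) = 1)
    (horth : ∀ i j, x i 0 ⬝ᵥ (Matrix.diagonal s0 *ᵥ x j 0) = if i = j then 1 else 0)
    (hdist : ∀ i j, i ≠ j → lam i 0 ≠ lam j 0) :
    ∀ i, x' i = ∑ j ∈ Finset.univ.erase i,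
      ((lam i 0 - lam j 0)⁻¹ * ((d *ᵥ x j 0) e) * ((d *ᵥ x i 0) e)) • x j 0 :=
  stmt_12_general d s0 s1 e x lam x' lam' hx hlam heig hnorm horth hdist
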